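/- arXiv:2507.02247 — 2 statements merged into one kernel-verified Lean document; each statement's English description precedes it below -/
import Mathlib

section
/- Let s > 0, let g : ℝ → ℝ be defined by g(x) = Σ_{j=3}^∞ j^{−2} 2^{−js} cos((11/8)·2^j·x), and for n ≥ 3 set t_n = 8π/(11·2^n). Then for every α ∈ (0,1) and every real p with 1 ≤ p < ∞: lim_{n→∞} t_n^{−α} · 2^{ns} · ( ∫₀^{2π} |g(x − t_n) − g(x)|^p dx )^{1/p} = +∞, even though t_n → 0⁺. -/
/-!
The frequencies `11·2^j` are distinct positive integers, so by orthogonality of cosines on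
`[0, 2π]` the coefficient of `g(· - T) - g` against `cos (11·2^m x)` is
`π a_m (cos (11·2^m T) - 1)`, where `a_m` is the `m`-th coefficient of `g`. At `T = t_{m+3}` the
phase `11·2^m T` is `π`, so `∫ |g(· - t_n) - g| ≥ 2π n^{-2} 2^{-ns}` with `n = m + 3`, and Jensen's
inequality upgrades this to `2^{ns} ‖g(· - t_n) - g‖_p ≥ (2π)^{1/p} n^{-2}`. Finally
`t_n^{-α} n^{-2}` is a multiple of `2^{nα} n^{-2} → ∞`.
-/

open Real Filter Topology MeasureTheory

lemma integral_cos_int_mul_add {k : ℤ} (hk : k ≠ 0) (φ : ℝ) :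
    ∫ x in (0 : ℝ)..2 * π, cos (k * x + φ) = 0 := by
  rw [intervalIntegral.integral_comp_mul_add (fun x => cos x) (Int.cast_ne_zero.mpr hk),
    integral_cos, mul_zero, zero_add, show (k : ℝ) * (2 * π) + φ = φ + k * (2 * π) by ring,
    sin_add_int_mul_two_pi, sub_self, smul_zero]

lemma integral_cos_nat_mul_add_mul_cos_nat_mul (m : ℕ) {n : ℕ} (hn : n ≠ 0) (φ : ℝ) :
    ∫ x in (0 : ℝ)..2 * π, cos (m * x + φ) * cos (n * x) = if m = n then π * cos φ else 0 := by
  have product_to_sum : ∀ x : ℝ, cos (m * x + φ) * cos (n * x) =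
      (cos (((m - n : ℤ) : ℝ) * x + φ) + cos (((m + n : ℤ) : ℝ) * x + φ)) / 2 := fun x => by
    push_cast
    rw [show ((m : ℝ) - n) * x + φ = (m * x + φ) - n * x by ring,
      show ((m : ℝ) + n) * x + φ = (m * x + φ) + n * x by ring, ← two_mul_cos_mul_cos]
    ring
  have hsum : (m + n : ℤ) ≠ 0 := by omega
  simp_rw [product_to_sum]
  rw [intervalIntegral.integral_div,
    intervalIntegral.integral_add ((by fun_prop : Continuous _).intervalIntegrable _ _)
      ((by fun_prop : Continuous _).intervalIntegrable _ _),
    integral_cos_int_mul_add hsum, add_zero]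
  split_ifs with hmn
  · simp only [hmn, sub_self, Int.cast_zero, zero_mul, zero_add, intervalIntegral.integral_const,
      sub_zero, smul_eq_mul]
    ring
  · rw [integral_cos_int_mul_add (by omega), zero_div]

lemma integral_abs_le_rpow_mul_integral_abs_rpow {f : ℝ → ℝ} {a b p : ℝ} (hab : a < b) (hp : 1 ≤ p)
    (hf : IntervalIntegrable f volume a b)
    (hfp : IntervalIntegrable (fun x => |f x| ^ p) volume a b) :
    ∫ x in a..b, |f x| ≤ (b - a) ^ (1 - 1 / p) * (∫ x in a..b, |f x| ^ p) ^ (1 / p) := by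
  have hL : 0 < b - a := sub_pos.mpr hab
  have jensen := (convexOn_rpow hp).map_set_average_le (continuousOn_id.rpow_const
      fun _ _ => Or.inr (zero_le_one.trans hp)) isClosed_Ici (μ := volume) (t := Set.Ioc a b)
      (f := fun x => |f x|) (by simp [hab]) (by simp) (ae_of_all _ fun x => abs_nonneg (f x))
      hf.1.abs hfp.1
  simp only [setAverage_eq, Real.volume_real_Ioc_of_le hab.le, smul_eq_mul,
    ← intervalIntegral.integral_of_le hab.le] at jensen
  set A := ∫ x in a..b, |f x|
  set I := ∫ x in a..b, |f x| ^ p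
  have hA : 0 ≤ A := intervalIntegral.integral_nonneg hab.le fun x _ => abs_nonneg _
  have hI : 0 ≤ I :=
    intervalIntegral.integral_nonneg hab.le fun x _ => rpow_nonneg (abs_nonneg _) p
  have hp0 : 0 < p := zero_lt_one.trans_le hp
  have average_le : (b - a)⁻¹ * A ≤ ((b - a)⁻¹ * I) ^ (1 / p) := by
    calc (b - a)⁻¹ * A = (((b - a)⁻¹ * A) ^ p) ^ (1 / p) := by
          rw [← rpow_mul (by positivity), mul_one_div_cancel hp0.ne', rpow_one]
      _ ≤ ((b - a)⁻¹ * I) ^ (1 / p) := by gcongr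
  rw [mul_rpow (by positivity) (by positivity), inv_rpow hL.le, ← div_eq_inv_mul, ← div_eq_inv_mul,
    div_le_iff₀ hL] at average_le
  rw [rpow_sub hL, rpow_one]
  calc A ≤ _ := average_le
    _ = _ := by ring

lemma abs_mul_cos_le (c y : ℝ) : |c * cos y| ≤ |c| := by
  rw [abs_mul]
  exact mul_le_of_le_one_right (abs_nonneg c) (abs_cos_le_one y)

section CosineSeries

variable {a : ℕ → ℝ} {k : ℕ → ℕ}

lemma summable_mul_cos (ha : Summable a) (y : ℕ → ℝ) : Summable fun j => a j * cos (y j) :=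
  ha.abs.of_norm_bounded fun j => abs_mul_cos_le (a j) (y j)

lemma integral_tsum_mul_cos_mul_cos (ha : Summable a) (hk : Function.Injective k) {m : ℕ}
    (hm : k m ≠ 0) (φ : ℕ → ℝ) :
    ∫ x in (0 : ℝ)..2 * π, (∑' j, a j * cos (k j * x + φ j)) * cos (k m * x) =
      π * a m * cos (φ m) := by
  have termwise : HasSum (fun j => ∫ x in (0 : ℝ)..2 * π, a j * cos (k j * x + φ j) * cos (k m * x))
      (∫ x in (0 : ℝ)..2 * π, (∑' j, a j * cos (k j * x + φ j)) * cos (k m * x)) := by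
    refine intervalIntegral.hasSum_integral_of_dominated_convergence (fun j _ => |a j|)
      (fun j => by fun_prop) (fun j => ae_of_all _ fun x _ => ?_) (ae_of_all _ fun _ _ => ha.abs)
      intervalIntegrable_const
      (ae_of_all _ fun x _ => ((summable_mul_cos ha _).hasSum.mul_right (cos (k m * x))))
    exact (abs_mul_cos_le _ _).trans (abs_mul_cos_le _ _)
  have orthogonality : HasSum
      (fun j => ∫ x in (0 : ℝ)..2 * π, a j * cos (k j * x + φ j) * cos (k m * x))
      (π * a m * cos (φ m)) := by
    simp_rw [mul_assoc, intervalIntegral.integral_const_mul,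
      integral_cos_nat_mul_add_mul_cos_nat_mul _ hm, hk.eq_iff]
    convert hasSum_ite_eq m (π * (a m * cos (φ m))) using 2 with j
    split_ifs with hjm
    · rw [hjm]
      ring
    · exact mul_zero _
  exact termwise.unique orthogonality

variable {f : ℝ → ℝ}

lemma continuous_of_forall_eq_tsum_mul_cos (hf : ∀ x, f x = ∑' j, a j * cos (k j * x))
    (ha : Summable a) : Continuous f := by
  rw [show f = _ from funext hf]
  exact continuous_tsum (fun j => by fun_prop) ha.abs fun j x => abs_mul_cos_le _ _

lemma two_pi_mul_abs_le_integral_abs_sub_comp_sub (hf : ∀ x, f x = ∑' j, a j * cos (k j * x))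
    (ha : Summable a) (hk : Function.Injective k)
    {m : ℕ} (hm : k m ≠ 0) {T : ℝ} (hT : cos (k m * T) = -1) :
    2 * π * |a m| ≤ ∫ x in (0 : ℝ)..2 * π, |f (x - T) - f x| := by
  have hfc := continuous_of_forall_eq_tsum_mul_cos hf ha
  have hshift : ∀ x, f (x - T) = ∑' j, a j * cos (k j * x + -(k j * T)) := fun x => by
    rw [hf]
    exact tsum_congr fun j => by rw [mul_sub, sub_eq_add_neg]
  have hf0 : ∀ x, f x = ∑' j, a j * cos (k j * x + (fun _ => (0 : ℝ)) j) := fun x => by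
    simp only [hf, add_zero]
  have coeff : ∫ x in (0 : ℝ)..2 * π, (f (x - T) - f x) * cos (k m * x) = -(2 * π * a m) := by
    simp_rw [sub_mul]
    rw [intervalIntegral.integral_sub ((by fun_prop : Continuous _).intervalIntegrable _ _)
      ((by fun_prop : Continuous _).intervalIntegrable _ _)]
    simp_rw [hshift, hf0]
    rw [integral_tsum_mul_cos_mul_cos ha hk hm, integral_tsum_mul_cos_mul_cos ha hk hm, cos_neg, hT,
      cos_zero]
    ring
  calc 2 * π * |a m| = |∫ x in (0 : ℝ)..2 * π, (f (x - T) - f x) * cos (k m * x)| := by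
        rw [coeff, abs_neg, abs_mul, abs_of_pos two_pi_pos]
    _ ≤ ∫ x in (0 : ℝ)..2 * π, |(f (x - T) - f x) * cos (k m * x)| :=
        intervalIntegral.abs_integral_le_integral_abs two_pi_pos.le
    _ ≤ ∫ x in (0 : ℝ)..2 * π, |f (x - T) - f x| :=
        intervalIntegral.integral_mono_on two_pi_pos.le
          ((by fun_prop : Continuous _).intervalIntegrable _ _)
          ((by fun_prop : Continuous _).intervalIntegrable _ _) fun x _ => abs_mul_cos_le _ _

lemma rpow_mul_abs_le_integral_abs_sub_comp_sub_rpow (hf : ∀ x, f x = ∑' j, a j * cos (k j * x))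
    (ha : Summable a)
    (hk : Function.Injective k) {m : ℕ} (hm : k m ≠ 0) {T : ℝ} (hT : cos (k m * T) = -1)
    {p : ℝ} (hp : 1 ≤ p) :
    (2 * π) ^ (1 / p) * |a m| ≤ (∫ x in (0 : ℝ)..2 * π, |f (x - T) - f x| ^ p) ^ (1 / p) := by
  have hfc := continuous_of_forall_eq_tsum_mul_cos hf ha
  have l1_le_lp := integral_abs_le_rpow_mul_integral_abs_rpow two_pi_pos hp
    (f := fun x => f (x - T) - f x) ((by fun_prop : Continuous _).intervalIntegrable _ _)
    (by apply Continuous.intervalIntegrable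
        exact (by fun_prop : Continuous fun x => |f (x - T) - f x|).rpow_const
          fun _ => Or.inr (zero_le_one.trans hp))
  rw [sub_zero] at l1_le_lp
  refine le_of_mul_le_mul_left ?_ (rpow_pos_of_pos two_pi_pos (1 - 1 / p))
  calc (2 * π) ^ (1 - 1 / p) * ((2 * π) ^ (1 / p) * |a m|) = 2 * π * |a m| := by
        rw [← mul_assoc, ← rpow_add two_pi_pos, sub_add_cancel, rpow_one]
    _ ≤ _ := (two_pi_mul_abs_le_integral_abs_sub_comp_sub hf ha hk hm hT).trans l1_le_lp

end CosineSeries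

lemma summable_add_three_rpow_neg_two_mul_two_rpow {s : ℝ} (hs : 0 ≤ s) :
    Summable fun j : ℕ => ((j : ℝ) + 3) ^ (-2 : ℝ) * (2 : ℝ) ^ (-((j : ℝ) + 3) * s) := by
  refine Summable.of_nonneg_of_le (fun j => by positivity) (fun j => ?_)
    ((summable_nat_add_iff 3).mpr (Real.summable_nat_rpow.mpr (by norm_num : (-2 : ℝ) < -1)))
  push_cast
  exact mul_le_of_le_one_right (by positivity)
    (rpow_le_one_of_one_le_of_nonpos one_le_two (mul_nonpos_of_nonpos_of_nonneg (by linarith) hs))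

lemma tendsto_div_two_pow_rpow_neg_mul_rpow_neg_two {c α : ℝ} (hc : 0 < c) (hα : 0 < α) :
    Tendsto (fun n : ℕ => (c / 2 ^ n) ^ (-α) * (n : ℝ) ^ (-2 : ℝ)) atTop atTop := by
  have hr : 1 < (2 : ℝ) ^ α := one_lt_rpow (by norm_num) hα
  have h0 : Tendsto (fun n : ℕ => (n : ℝ) ^ 2 / ((2 : ℝ) ^ α) ^ n) atTop (𝓝[>] 0) :=
    tendsto_nhdsWithin_iff.mpr ⟨tendsto_pow_const_div_const_pow_of_one_lt 2 hr,
      (eventually_gt_atTop 0).mono fun n hn => Set.mem_Ioi.mpr (by positivity)⟩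
  refine ((tendsto_inv_nhdsGT_zero.comp h0).const_mul_atTop (rpow_pos_of_pos hc (-α))).congr
    fun n => ?_
  rw [Function.comp_apply, div_rpow hc.le (by positivity),
    rpow_neg (by positivity : (0 : ℝ) ≤ 2 ^ n), ← rpow_pow_comm zero_le_two, rpow_neg (Nat.cast_nonneg n) 2, rpow_two]
  ring

lemma rpow_mul_rpow_neg_two_le_two_rpow_mul_integral_abs_sub_comp_sub_rpow {s p : ℝ} (hs : 0 ≤ s)
    (hp : 1 ≤ p) {g : ℝ → ℝ}
    (hg : ∀ x : ℝ, g x = ∑' j : ℕ,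
      ((j : ℝ) + 3) ^ (-2 : ℝ) * (2 : ℝ) ^ (-((j : ℝ) + 3) * s) * cos (11 / 8 * 2 ^ (j + 3) * x))
    (m : ℕ) :
    (2 * π) ^ (1 / p) * ((m + 3 : ℕ) : ℝ) ^ (-2 : ℝ) ≤ 2 ^ (((m + 3 : ℕ) : ℝ) * s) *
      (∫ x in (0 : ℝ)..2 * π, |g (x - 8 * π / (11 * 2 ^ (m + 3))) - g x| ^ p) ^ (1 / p) := by
  set a : ℕ → ℝ := fun j => ((j : ℝ) + 3) ^ (-2 : ℝ) * (2 : ℝ) ^ (-((j : ℝ) + 3) * s)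
  have hg' : ∀ x, g x = ∑' j, a j * cos ((11 * 2 ^ j : ℕ) * x) := fun x => by
    rw [hg]
    exact tsum_congr fun j => by congr 2; push_cast; ring
  have hk : Function.Injective fun j : ℕ => 11 * 2 ^ j := fun i j h =>
    Nat.pow_right_injective le_rfl (by simpa using h)
  have hT : cos ((11 * 2 ^ m : ℕ) * (8 * π / (11 * 2 ^ (m + 3)))) = -1 := by
    rw [show ((11 * 2 ^ m : ℕ) : ℝ) * (8 * π / (11 * 2 ^ (m + 3))) = π by
      push_cast; field_simp; ring, cos_pi]
  have hcoeff : 2 ^ (((m + 3 : ℕ) : ℝ) * s) * |a m| = ((m + 3 : ℕ) : ℝ) ^ (-2 : ℝ) := by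
    rw [abs_of_nonneg (by positivity), mul_left_comm, neg_mul, rpow_neg zero_le_two]
    push_cast
    rw [mul_inv_cancel₀ (by positivity), mul_one]
  calc (2 * π) ^ (1 / p) * ((m + 3 : ℕ) : ℝ) ^ (-2 : ℝ)
      = 2 ^ (((m + 3 : ℕ) : ℝ) * s) * ((2 * π) ^ (1 / p) * |a m|) := by
        rw [← hcoeff]; ring
    _ ≤ _ := by
        gcongr
        exact rpow_mul_abs_le_integral_abs_sub_comp_sub_rpow hg'
          (summable_add_three_rpow_neg_two_mul_two_rpow hs) hk (by positivity) hT hp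

/-- For `s > 0`, `g(x) = Σ_{j=3}^∞ j^{-2} 2^{-js} cos((11/8)·2^j·x)` and
`t_n = 8π/(11·2^n)`: for every `α ∈ (0,1)` and `1 ≤ p < ∞`,
`t_n^{-α} · 2^{ns} · ‖g(·-t_n) - g‖_{L^p(0,2π)} → +∞`, even though `t_n → 0⁺`. -/
theorem stmt_10 (s : ℝ) (hs : 0 < s) (g : ℝ → ℝ)
    (hg : ∀ x : ℝ, g x = ∑' j : ℕ,
      ((j : ℝ) + 3) ^ (-2 : ℝ) * (2 : ℝ) ^ (-(((j : ℝ) + 3)) * s)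
        * Real.cos ((11 / 8) * 2 ^ (j + 3) * x))
    (t : ℕ → ℝ) (ht : ∀ n, t n = 8 * π / (11 * 2 ^ n))
    (α : ℝ) (hα : α ∈ Set.Ioo (0 : ℝ) 1) (p : ℝ) (hp : 1 ≤ p) :
    Tendsto (fun n : ℕ =>
        (t n) ^ (-α) * (2 : ℝ) ^ ((n : ℝ) * s)
          * (∫ x in (0:ℝ)..(2 * π), |g (x - t n) - g x| ^ p) ^ (1 / p))
      atTop atTop ∧
    Tendsto t atTop (nhdsWithin 0 (Set.Ioi 0)) := by
  have asymptotics : Tendsto (fun n : ℕ => t n ^ (-α) * (n : ℝ) ^ (-2 : ℝ)) atTop atTop := by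
    simpa only [ht, div_mul_eq_div_div] using
      tendsto_div_two_pow_rpow_neg_mul_rpow_neg_two (c := 8 * π / 11) (by positivity) hα.1
  refine ⟨tendsto_atTop_mono' _ ((eventually_ge_atTop 3).mono fun n hn => ?_)
    (asymptotics.const_mul_atTop (by positivity : 0 < (2 * π) ^ (1 / p))), ?_⟩
  · obtain ⟨m, rfl⟩ := Nat.exists_eq_add_of_le' hn
    have ht0 : 0 < t (m + 3) := by rw [ht]; positivity
    dsimp only
    rw [mul_left_comm, mul_assoc (t (m + 3) ^ (-α))]
    refine mul_le_mul_of_nonneg_left ?_ (rpow_nonneg ht0.le _)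
    rw [ht]
    exact rpow_mul_rpow_neg_two_le_two_rpow_mul_integral_abs_sub_comp_sub_rpow hs.le hp hg m
  · rw [show t = fun n => 8 * π / (11 * 2 ^ n) from funext ht]
    exact tendsto_nhdsWithin_iff.mpr ⟨tendsto_const_nhds.div_atTop
      ((tendsto_pow_atTop_atTop_of_one_lt one_lt_two).const_mul_atTop (by norm_num)),
      Eventually.of_forall fun n => Set.mem_Ioi.mpr (by positivity)⟩
end

section
/- Let s > 0, and for n ≥ 3 set t_n = 8π/(11·2^n) and ε_n = (8/(11π))·2^{−n}. Let f(x) = Σ_{j=3}^∞ 2^{−js} cos((11/8)·2^j·x) and F_n(t,x) = Σ_{j=3}^∞ 2^{−js} e^{−ε_n(121/64)·2^{2j}·t} cos((11/8)·2^j·(x − t)). Then ε_n·(121/64)·2^{2n}·t_n = 1, and the Fourier coefficient of the 2π-periodic function x ↦ F_n(t_n, x) − f(x − t_n) at the frequency 11·2^{n−3}, with normalization ĝ(k) = (1/(2π)) ∫₀^{2π} g(x) e^{−ikx} dx, has absolute value (1 − e^{−1})·2^{−ns}/2. -/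
open Real Complex

/-!
`F_n(t_n, ·) - f(· - t_n)` is the cosine series `Σ_j 2^{-js} (e^{-ε_n (121/64) 4^j t_n} - 1)
cos(11·2^{j-3} (x - t_n))`, whose coefficients are dominated by the summable `2^{-js}`.
Integrating termwise, orthogonality of the exponentials on `[0, 2π]` and the distinctness of the
frequencies `11·2^{j-3}` leave only the term `j = n`, whose damping factor is `e^{-1}` because
`ε_n (121/64) 2^{2n} t_n = 1`.
-/

theorem integral_exp_int_mul_I (a : ℤ) :
    ∫ x in (0:ℝ)..2 * π, Complex.exp (a * I * x) = if a = 0 then (2 * π : ℂ) else 0 := by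
  split_ifs with ha
  · simp [ha]
  · have haI : (a : ℂ) * I ≠ 0 := by simp [Complex.I_ne_zero, ha]
    rw [integral_exp_mul_complex haI,
      show (a : ℂ) * I * ((2 * π : ℝ) : ℂ) = a * (2 * π * I) by push_cast; ring,
      Complex.exp_int_mul_two_pi_mul_I]
    simp

theorem integral_cos_mul_exp_neg_I_mul (m k : ℕ) (t : ℝ) (hk : 0 < k) :
    ∫ x in (0:ℝ)..2 * π, (Real.cos (m * (x - t)) : ℂ) * Complex.exp (-I * k * x)
      = if m = k then π * Complex.exp (-I * m * t) else 0 := by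
  have hsplit : ∀ x : ℝ, (Real.cos (m * (x - t)) : ℂ) * Complex.exp (-I * k * x)
      = Complex.exp (-I * m * t) / 2 * Complex.exp ((((m : ℤ) - k : ℤ) : ℂ) * I * x)
        + Complex.exp (I * m * t) / 2 * Complex.exp ((((-(m + k) : ℤ)) : ℂ) * I * x) := by
    intro x
    have h₁ : Complex.exp (-I * m * t) * Complex.exp ((((m : ℤ) - k : ℤ) : ℂ) * I * x)
        = Complex.exp ((m * (x - t) : ℝ) * I) * Complex.exp (-I * k * x) := by
      rw [← Complex.exp_add, ← Complex.exp_add]; congr 1; push_cast; ring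
    have h₂ : Complex.exp (I * m * t) * Complex.exp ((((-(m + k) : ℤ)) : ℂ) * I * x)
        = Complex.exp (-(m * (x - t) : ℝ) * I) * Complex.exp (-I * k * x) := by
      rw [← Complex.exp_add, ← Complex.exp_add]; congr 1; push_cast; ring
    rw [Complex.ofReal_cos, Complex.cos]
    linear_combination (-h₁ - h₂) / 2
  have hexp : ∀ c : ℂ, IntervalIntegrable (fun x : ℝ => Complex.exp (c * x))
      MeasureTheory.volume 0 (2 * π) := fun c => (by fun_prop : Continuous fun x : ℝ =>
        Complex.exp (c * x)).intervalIntegrable _ _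
  rw [intervalIntegral.integral_congr fun x _ => hsplit x, intervalIntegral.integral_add
    ((hexp _).const_mul _) ((hexp _).const_mul _), intervalIntegral.integral_const_mul,
    intervalIntegral.integral_const_mul, integral_exp_int_mul_I, integral_exp_int_mul_I,
    if_neg (show (-(m + k) : ℤ) ≠ 0 by omega)]
  by_cases hmk : m = k
  · rw [if_pos (by omega), if_pos hmk]; ring
  · rw [if_neg (by omega), if_neg hmk]; simp

theorem summable_mul_cos_s16 {b : ℕ → ℝ} (hb : Summable b) (θ : ℕ → ℝ) :
    Summable fun j => b j * Real.cos (θ j) :=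
  hb.abs.of_norm_bounded fun j => by
    simpa [abs_mul] using mul_le_of_le_one_right (abs_nonneg (b j)) (Real.abs_cos_le_one (θ j))

theorem norm_exp_neg_I_mul (k : ℕ) (x : ℝ) : ‖Complex.exp (-I * k * x)‖ = 1 := by
  rw [show -I * k * x = ((-(k * x) : ℝ) : ℂ) * I by push_cast; ring,
    Complex.norm_exp_ofReal_mul_I]

theorem integral_tsum_cos_mul_exp_neg_I_mul {b : ℕ → ℝ} (hb : Summable b) {m : ℕ → ℕ}
    (hm : Function.Injective m) (t : ℝ) {j₀ : ℕ} (hj₀ : 0 < m j₀) :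
    ∫ x in (0:ℝ)..2 * π,
        ((∑' j, b j * Real.cos (m j * (x - t)) : ℝ) : ℂ) * Complex.exp (-I * m j₀ * x)
      = b j₀ * π * Complex.exp (-I * m j₀ * t) := by
  have hterm : ∀ j, ∫ x in (0:ℝ)..2 * π,
      ((b j * Real.cos (m j * (x - t)) : ℝ) : ℂ) * Complex.exp (-I * m j₀ * x)
        = if j = j₀ then b j₀ * π * Complex.exp (-I * m j₀ * t) else 0 := by
    intro j
    simp only [Complex.ofReal_mul, mul_assoc (b j : ℂ)]
    rw [intervalIntegral.integral_const_mul, integral_cos_mul_exp_neg_I_mul _ _ _ hj₀]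
    simp only [hm.eq_iff]
    split_ifs with h
    · subst h; ring
    · simp
  have hsum := intervalIntegral.hasSum_integral_of_dominated_convergence
    (μ := MeasureTheory.volume) (a := 0) (b := 2 * π)
    (F := fun j x => ((b j * Real.cos (m j * (x - t)) : ℝ) : ℂ) * Complex.exp (-I * m j₀ * x))
    (fun j _ => |b j|) (fun j => by fun_prop)
    (fun j => .of_forall fun x _ => by
      rw [norm_mul, norm_exp_neg_I_mul, mul_one, Complex.norm_real, Real.norm_eq_abs, abs_mul]
      exact mul_le_of_le_one_right (abs_nonneg (b j)) (Real.abs_cos_le_one _))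
    (.of_forall fun _ _ => hb.abs) intervalIntegrable_const
    (.of_forall fun x _ =>
      (Complex.hasSum_ofReal.mpr (summable_mul_cos_s16 hb _).hasSum).mul_right _)
  simp only [hterm] at hsum
  exact hsum.unique (hasSum_ite_eq j₀ _)

theorem summable_rpow_neg_add_mul {r : ℝ} (hr : 1 < r) {s : ℝ} (hs : 0 < s) (c : ℝ) :
    Summable fun j : ℕ => r ^ (-((j : ℝ) + c) * s) := by
  have hq : r ^ (-s) < 1 := Real.rpow_lt_one_of_one_lt_of_neg hr (neg_lt_zero.mpr hs)
  refine ((summable_geometric_of_lt_one (by positivity) hq).mul_right (r ^ (-c * s))).congr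
    fun j => ?_
  rw [← Real.rpow_natCast, ← Real.rpow_mul (by positivity), ← Real.rpow_add (by positivity)]
  ring_nf

theorem Summable.mul_exp_sub_one {a μ : ℕ → ℝ} (ha : Summable a) (hμ : ∀ j, μ j ≤ 0) :
    Summable fun j => a j * (Real.exp (μ j) - 1) :=
  ha.abs.of_norm_bounded fun j => by
    have hexp₀ := Real.exp_pos (μ j)
    have hexp₁ := Real.exp_le_one_iff.mpr (hμ j)
    rw [Real.norm_eq_abs, abs_mul, abs_of_nonpos (by linarith : Real.exp (μ j) - 1 ≤ 0)]
    exact mul_le_of_le_one_right (abs_nonneg _) (by linarith)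

/-- For `s > 0`, `t_n = 8π/(11·2^n)`, `ε_n = (8/(11π))·2^{-n}`,
`f(x) = Σ_{j=3}^∞ 2^{-js} cos((11/8)·2^j·x)` and
`F_n(t,x) = Σ_{j=3}^∞ 2^{-js} e^{-ε_n(121/64)·2^{2j}·t} cos((11/8)·2^j·(x-t))`:
one has `ε_n·(121/64)·2^{2n}·t_n = 1`, and the Fourier coefficient of
`x ↦ F_n(t_n,x) - f(x - t_n)` at frequency `11·2^{n-3}` has absolute value
`(1 - e^{-1})·2^{-ns}/2`. -/
theorem stmt_16 (s : ℝ) (hs : 0 < s) (n : ℕ) (hn : 3 ≤ n) (tn εn : ℝ)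
    (htn : tn = 8 * π / (11 * 2 ^ n)) (hεn : εn = (8 / (11 * π)) * 2 ^ (-(n : ℤ)))
    (f : ℝ → ℝ) (Fn : ℝ → ℝ → ℝ)
    (hf : ∀ x : ℝ, f x = ∑' j : ℕ,
      (2 : ℝ) ^ (-(((j : ℝ) + 3)) * s) * Real.cos ((11 / 8) * 2 ^ (j + 3) * x))
    (hFn : ∀ t x : ℝ, Fn t x = ∑' j : ℕ,
      (2 : ℝ) ^ (-(((j : ℝ) + 3)) * s) * Real.exp (-εn * (121 / 64) * 2 ^ (2 * (j + 3)) * t)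
        * Real.cos ((11 / 8) * 2 ^ (j + 3) * (x - t))) :
    εn * (121 / 64) * 2 ^ (2 * n) * tn = 1 ∧
    ‖(1 / (2 * (π : ℂ))) * ∫ x in (0:ℝ)..(2 * π),
        ((Fn tn x - f (x - tn) : ℝ) : ℂ)
          * Complex.exp (-Complex.I * ((11 * 2 ^ (n - 3) : ℕ) : ℂ) * (x : ℂ))‖
      = (1 - Real.exp (-1)) * (2 : ℝ) ^ (-(n : ℝ) * s) / 2 := by
  have hεt : εn * (121 / 64) * 2 ^ (2 * n) * tn = 1 := by
    rw [htn, hεn, zpow_neg, zpow_natCast, two_mul, pow_add]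
    field_simp
    ring
  refine ⟨hεt, ?_⟩
  set a : ℕ → ℝ := fun j => (2 : ℝ) ^ (-((j : ℝ) + 3) * s) with ha_def
  set b : ℕ → ℝ := fun j =>
    a j * (Real.exp (-εn * (121 / 64) * 2 ^ (2 * (j + 3)) * tn) - 1) with hb_def
  have ha : Summable a := summable_rpow_neg_add_mul one_lt_two hs 3
  have hεt_nonneg : 0 ≤ εn * tn := by rw [htn, hεn]; positivity
  have hb : Summable b := ha.mul_exp_sub_one fun j => by
    nlinarith [pow_pos (two_pos : (0 : ℝ) < 2) (2 * (j + 3))]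
  have hfreq : ∀ j : ℕ, (11 / 8 : ℝ) * 2 ^ (j + 3) = ((11 * 2 ^ j : ℕ) : ℝ) := by
    intro j; push_cast; ring
  have hdiff : ∀ x, Fn tn x - f (x - tn)
      = ∑' j, b j * Real.cos ((11 * 2 ^ j : ℕ) * (x - tn)) := by
    intro x
    have hF : Fn tn x = ∑' j, (a j * Real.cos ((11 * 2 ^ j : ℕ) * (x - tn))
        + b j * Real.cos ((11 * 2 ^ j : ℕ) * (x - tn))) :=
      (hFn tn x).trans (tsum_congr fun j => by rw [hfreq]; ring)
    rw [hF, (summable_mul_cos_s16 ha _).tsum_add (summable_mul_cos_s16 hb _), hf]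
    simp only [hfreq, ha_def]
    ring
  have hb₀ : b (n - 3) = 2 ^ (-(n : ℝ) * s) * (Real.exp (-1) - 1) := by
    simp only [hb_def, ha_def, Nat.sub_add_cancel hn, Nat.cast_sub hn]
    rw [show -εn * (121 / 64) * 2 ^ (2 * n) * tn = -1 by linarith]
    ring_nf
  have hinj : Function.Injective fun j : ℕ => 11 * 2 ^ j := fun i j h =>
    Nat.pow_right_injective le_rfl (by simpa using h)
  simp only [hdiff]
  have hcoeff := integral_tsum_cos_mul_exp_neg_I_mul hb hinj tn (j₀ := n - 3) (by positivity)
  rw [hcoeff, hb₀]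
  have hexp : Real.exp (-1) < 1 := Real.exp_lt_one_iff.mpr (by norm_num)
  have hpow : (0 : ℝ) < 2 ^ (-(n : ℝ) * s) := by positivity
  simp only [norm_mul, norm_div, norm_one, norm_exp_neg_I_mul, Complex.norm_real,
    Complex.norm_ofNat, Real.norm_eq_abs, abs_of_pos pi_pos, abs_of_pos hpow,
    abs_of_neg (sub_neg.mpr hexp)]
  field_simp
  ring
end
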